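/- Let g be an element of a group G that admits a finite right Engel sink, let R(g) = { z ∈ G : there exist x ∈ G and integers n ≥ 1, m ≥ 1 with z = [g,_n x] = [g,_{n+m} x] } be its minimal right Engel sink, and suppose |R(g)| = m. Then for every h in the centralizer of g in G, the element h^{m!} commutes with every element of R(g). -/
import Mathlib


/-- The commutator `[a,b] = a⁻¹ b⁻¹ a b`. -/
def cmtr {G : Type*} [Group G] (a b : G) : G := a⁻¹ * b⁻¹ * a * b

/-- `engel a b n` is the left-normed Engel commutator `[a,_n b] = [[...[[a,b],b],...],b]`
with `b` repeated `n` times. -/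
def engel {G : Type*} [Group G] (a b : G) : ℕ → G
  | 0 => a
  | n + 1 => cmtr (engel a b n) b

/-- A finite subset `R` of `G` is a right Engel sink for `g` if for every `x ∈ G` there is a
positive integer `n₀` such that `[g,_n x] ∈ R` for all `n ≥ n₀`. -/
def IsRightEngelSink {G : Type*} [Group G] (g : G) (R : Set G) : Prop :=
  R.Finite ∧ ∀ x : G, ∃ n₀ : ℕ, 0 < n₀ ∧ ∀ n ≥ n₀, engel g x n ∈ R

/-- A finite subset `E` of `G` is a left Engel sink for `g` if for every `x ∈ G` there is a
positive integer `n₀` such that `[x,_n g] ∈ E` for all `n ≥ n₀`. -/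
def IsLeftEngelSink {G : Type*} [Group G] (g : G) (E : Set G) : Prop :=
  E.Finite ∧ ∀ x : G, ∃ n₀ : ℕ, 0 < n₀ ∧ ∀ n ≥ n₀, engel x g n ∈ E

/-- An element is almost right Engel if it admits a finite right Engel sink. -/
def AlmostRightEngel {G : Type*} [Group G] (g : G) : Prop :=
  ∃ R : Set G, IsRightEngelSink g R

/-- A group is locally nilpotent if every finitely generated subgroup is nilpotent. -/
def LocallyNilpotent (G : Type*) [Group G] : Prop :=
  ∀ H : Subgroup G, H.FG → Group.IsNilpotent H

/-- The minimal right Engel sink of `g`. -/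
def minRightEngelSink {G : Type*} [Group G] (g : G) : Set G :=
  {z : G | ∃ x : G, ∃ n : ℕ, 1 ≤ n ∧ ∃ k : ℕ, 1 ≤ k ∧
    engel g x n = z ∧ engel g x (n + k) = z}

theorem engel_add {G : Type*} [Group G] (a b : G) (n k : ℕ) :
    engel a b (n + k) = engel (engel a b n) b k := by
  induction k with
  | zero => rfl
  | succ k ih => rw [← Nat.add_assoc, engel, engel, ih]

theorem conj_engel {G : Type*} [Group G] (a b h : G) (n : ℕ) :
    h⁻¹ * engel a b n * h = engel (h⁻¹ * a * h) (h⁻¹ * b * h) n := by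
  induction n with
  | zero => rfl
  | succ n ih =>
    rw [engel, engel, ← ih]
    simp only [cmtr]
    group

theorem sink_subset {G : Type*} [Group G] {g : G} {R : Set G}
    (hR : IsRightEngelSink g R) : minRightEngelSink g ⊆ R := by
  rintro z ⟨x, n, hn, k, hk, h1, h2⟩
  have key : ∀ j : ℕ, engel g x (n + j * k) = z := by
    intro j
    induction j with
    | zero => simpa using h1
    | succ j ih =>
      have heq : n + (j + 1) * k = (n + j * k) + k := by ring
      rw [heq, engel_add, ih, ← h1, ← engel_add, h2]
      exact h1.symm
  obtain ⟨n₀, hn₀, hmem⟩ := hR.2 x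
  have hle : n₀ ≤ n + n₀ * k := by nlinarith
  have := hmem (n + n₀ * k) hle
  rwa [key n₀] at this

theorem conj_mem {G : Type*} [Group G] {g h : G} (hc : h * g = g * h)
    {z : G} (hz : z ∈ minRightEngelSink g) : h⁻¹ * z * h ∈ minRightEngelSink g := by
  obtain ⟨x, n, hn, k, hk, h1, h2⟩ := hz
  have hg : h⁻¹ * g * h = g := by
    rw [mul_assoc, ← hc, ← mul_assoc, inv_mul_cancel, one_mul]
  refine ⟨h⁻¹ * x * h, n, hn, k, hk, ?_, ?_⟩
  · conv_lhs => rw [← hg]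
    rw [← conj_engel, h1]
  · conv_lhs => rw [← hg]
    rw [← conj_engel, h2]

/-- If `g` has a finite right Engel sink and its minimal right Engel sink has cardinality
`m`, then for every `h` centralizing `g` the power `h^(m!)` commutes with every element of
the minimal right Engel sink. -/
theorem centralizer_power_centralizes_sink {G : Type*} [Group G] (g : G) (m : ℕ)
    (hfin : AlmostRightEngel g)
    (hcard : Nat.card (minRightEngelSink g) = m) :
    ∀ h : G, h * g = g * h →
      ∀ z ∈ minRightEngelSink g,
        h ^ Nat.factorial m * z = z * h ^ Nat.factorial m := by
  intro h hc z hz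
  obtain ⟨R, hR⟩ := hfin
  have hSfin : (minRightEngelSink g).Finite := hR.1.subset (sink_subset hR)
  haveI : Fintype (minRightEngelSink g) := hSfin.fintype
  classical
  have hcinv : h⁻¹ * g = g * h⁻¹ := by
    calc h⁻¹ * g = h⁻¹ * (g * h) * h⁻¹ := by group
      _ = h⁻¹ * (h * g) * h⁻¹ := by rw [hc]
      _ = g * h⁻¹ := by group
  let σ : Equiv.Perm (minRightEngelSink g) :=
    { toFun := fun w => ⟨h⁻¹ * w * h, conj_mem hc w.2⟩
      invFun := fun w => ⟨h * w * h⁻¹, by simpa using conj_mem hcinv w.2⟩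
      left_inv := by intro w; ext; simp; group
      right_inv := by intro w; ext; simp; group }
  have hpow : ∀ j : ℕ, ∀ w : minRightEngelSink g,
      ((σ ^ j) w : G) = (h ^ j)⁻¹ * w * h ^ j := by
    intro j
    induction j with
    | zero => intro w; simp
    | succ j ih =>
      intro w
      rw [pow_succ', Equiv.Perm.mul_apply]
      have hstep : (↑(σ ((σ ^ j) w)) : G) = h⁻¹ * ((h ^ j)⁻¹ * ↑w * h ^ j) * h := by
        rw [← ih w]; rfl
      rw [hstep, pow_succ]
      group
  have hcard' : Fintype.card (minRightEngelSink g) = m := by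
    rw [← Nat.card_eq_fintype_card, hcard]
  have hone : σ ^ Nat.factorial m = 1 := by
    apply orderOf_dvd_iff_pow_eq_one.mp
    rw [← hcard', ← Fintype.card_perm]
    exact orderOf_dvd_card
  have := hpow (Nat.factorial m) ⟨z, hz⟩
  rw [hone] at this
  simp only [Equiv.Perm.coe_one, id_eq] at this
  have hz' : (h ^ Nat.factorial m)⁻¹ * z * h ^ Nat.factorial m = z := this.symm
  calc h ^ Nat.factorial m * z
      = h ^ Nat.factorial m * ((h ^ Nat.factorial m)⁻¹ * z * h ^ Nat.factorial m) := by
        rw [hz']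
    _ = z * h ^ Nat.factorial m := by group
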